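/- Let L ≥ 2, pm : Fin L → ℝ strictly increasing, a : Fin L → ℝ nonnegative, S the multiset of 2L extended metrics. Every element of R = {s ∈ S : s > pm (L-1)} fails to be among the L−1 smallest elements of S; i.e., at least L−1 elements of S are strictly smaller than any rejected element. -/

import Mathlib

theorem StrictMono.le_card_filter_map_lt {α : Type*} [Preorder α] {n : ℕ} {f : Fin n → α}
    (hf : StrictMono f) {i : Fin n} {s : α} [DecidablePred (· < s)] (hs : f i ≤ s) :
    (i : ℕ) ≤ ((Finset.univ.val.map f).filter (· < s)).card := by
  have hbelow : Finset.Iio i ⊆ Finset.univ.filter (fun j => f j < s) := fun j hj =>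
    Finset.mem_filter.2 ⟨Finset.mem_univ j, (hf (Finset.mem_Iio.1 hj)).trans_le hs⟩
  calc (i : ℕ) = (Finset.Iio i).card := (Fin.card_Iio i).symm
    _ ≤ (Finset.univ.filter (fun j => f j < s)).card := Finset.card_le_card hbelow
    _ = ((Finset.univ.val.map f).filter (· < s)).card := by
      rw [Multiset.filter_map, Multiset.card_map]; rfl

/-- Soundness of DTS.2: any rejected candidate (extended metric above
`RT = pm (L-1)`) has at least `L - 1` elements of `S` strictly below it. -/
theorem dts_rejected_not_among_best
    (L : ℕ) (hL : 2 ≤ L)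
    (pm a : Fin L → ℝ)
    (hpm : StrictMono pm)
    (S : Multiset ℝ)
    (hS : S = (Finset.univ : Finset (Fin L)).val.map pm +
              (Finset.univ : Finset (Fin L)).val.map (fun l => pm l + a l)) :
    ∀ s ∈ S, pm ⟨L - 1, by omega⟩ < s →
      L - 1 ≤ (S.filter (fun t => t < s)).card := by
  intro s _ hRT
  -- the `L - 1` paths `pm 0, …, pm (L-2)` already lie strictly below `s`
  have hpaths := hpm.le_card_filter_map_lt (s := s) hRT.le
  subst hS
  rw [Multiset.filter_add, Multiset.card_add]
  exact hpaths.trans (Nat.le_add_right _ _)
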